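/- arXiv:1109.5802 — 3 statements merged into one kernel-verified Lean document; each statement's English description precedes it below -/
import Mathlib

section
/- Let (X,0) ⊂ (C^N,0) be a d-dimensional equidimensional reduced complex analytic germ with Whitney stratification {V_i}, i = 0,…,q, V_0 = {0}, V_q = X_reg, and suppose the Ebeling–Gusein-Zade index formula ind^C_{X,0} ω = Σ_{i=0}^{q} n_i · Eu_{closure(V_i),0}(ω) holds with n_i = (−1)^{d − d_i − 1}(χ(lk^C(V_i, X)) − 1) for i < q and n_q = 1. Then taking ω = Σ_k conj(x_k) dx_k (whose real part is radial with radial index 1, so ind^C_{X,0} ω = (−1)^d, and Eu_{Y,0}(ω) = (−1)^{dim Y} Eu_Y(0)), one deduces: Eu_X(0) = 1 + Σ_{i=0}^{q−1} (χ(lk^C(V_i, X)) − 1) · Eu_{closure(V_i)}(0). -/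
/-- Let `(X,0)` be a `d`-dimensional equidimensional reduced complex
analytic germ with Whitney stratification `V_0 = {0}, …, V_q = X_reg` (`dim V_i = dS i`),
and suppose the Ebeling–Gusein-Zade index formula
`ind^ℂ_{X,0} ω = Σ_{i=0}^{q} n_i · Eu_{closure(V_i),0}(ω)` holds, with
`n_i = (−1)^{d − dS i − 1}(χ(lk^ℂ(V_i,X)) − 1)` for `i < q` and `n_q = 1`. Taking
`ω = Σ_k conj(x_k) dx_k`, whose complex radial index is `(−1)^d`, and using
`Eu_{Y,0}(ω) = (−1)^{dim Y} Eu_Y(0)`, one deduces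
`Eu_X(0) = 1 + Σ_{i=0}^{q−1} (χ(lk^ℂ(V_i,X)) − 1) · Eu_{closure(V_i)}(0)`.
Here `Eu i = Eu_{closure(V_i)}(0)` (so `Eu q = Eu_X(0)`), `EuForm i = Eu_{closure(V_i),0}(ω)`,
`χlk i = χ(lk^ℂ(V_i, X))`, and `indC = ind^ℂ_{X,0} ω`. -/
theorem euler_obstruction_via_complex_links
    (d q : ℕ) (hq : 0 < q) (dS : ℕ → ℕ)
    (hd0 : dS 0 = 0) (hdq : dS q = d) (hdi : ∀ i < q, dS i < d)
    (χlk : ℕ → ℤ) (Eu EuForm : ℕ → ℤ) (indC : ℤ)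
    -- the Ebeling–Gusein-Zade formula for the 1-form `ω = Σ conj(x_k) dx_k`
    (hEG : indC = (∑ i ∈ Finset.range q,
      (-1 : ℤ) ^ (d - dS i - 1) * (χlk i - 1) * EuForm i) + EuForm q)
    -- the real part of `ω` is radial, with radial index `1`, so `ind^ℂ_{X,0} ω = (−1)^d`
    (hind : indC = (-1) ^ d)
    -- `Eu_{Y,0}(ω) = (−1)^{dim Y} Eu_Y(0)`
    (hdual : ∀ i ≤ q, EuForm i = (-1) ^ (dS i) * Eu i) :
    Eu q = 1 + ∑ i ∈ Finset.range q, (χlk i - 1) * Eu i := by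
  have hd1 : 0 < d := (Nat.zero_le _).trans_lt (hdi 0 hq)
  have hsum : (∑ i ∈ Finset.range q,
      (-1 : ℤ) ^ (d - dS i - 1) * (χlk i - 1) * EuForm i)
      = (-1 : ℤ) ^ (d - 1) * ∑ i ∈ Finset.range q, (χlk i - 1) * Eu i := by
    rw [Finset.mul_sum]
    refine Finset.sum_congr rfl fun i hi => ?_
    have hiq := Finset.mem_range.mp hi
    rw [hdual i hiq.le]
    have hpow : (-1 : ℤ) ^ (d - dS i - 1) * (-1) ^ (dS i) = (-1) ^ (d - 1) := by
      rw [← pow_add]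
      congr 1
      have := hdi i hiq
      omega
    calc (-1 : ℤ) ^ (d - dS i - 1) * (χlk i - 1) * ((-1) ^ dS i * Eu i)
        = ((-1 : ℤ) ^ (d - dS i - 1) * (-1) ^ (dS i)) * ((χlk i - 1) * Eu i) := by ring
      _ = (-1 : ℤ) ^ (d - 1) * ((χlk i - 1) * Eu i) := by rw [hpow]
  set S := ∑ i ∈ Finset.range q, (χlk i - 1) * Eu i with hS
  have hEuq : EuForm q = (-1 : ℤ) ^ d * Eu q := by rw [hdual q le_rfl, hdq]
  have hdd : (-1 : ℤ) ^ d = (-1) ^ (d - 1) * (-1) := by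
    rw [← pow_succ]
    congr 1
    omega
  rw [hsum, hEuq, hind, hdd] at hEG
  have he : (-1 : ℤ) ^ (d - 1) * (-1) ^ (d - 1) = 1 := by
    rw [← pow_add, ← two_mul, pow_mul]; norm_num
  have := congrArg (fun x => (-1 : ℤ) ^ (d - 1) * x) hEG
  nlinarith [this, he]
end

section
/- Under the same stratified setting, with f : (X,0) → (C,0) having an isolated stratified singularity at 0, combining the Ebeling–Gusein-Zade formula ind^C_{X,0}(df) = Σ n_i · Eu_{closure(V_i),0}(df), the identity Eu_{Y,0}(df) = (−1)^{dim Y} Eu_{f,Y}(0), and ind^C_{X,0}(df) = (−1)^d (1 − χ(f^{-1}(δ) ∩ X ∩ B_ε)), one obtains: 1 − χ(f^{-1}(δ) ∩ X ∩ B_ε) = Σ_{i=0}^{q} (1 − χ(lk^C(V_i, X))) · Eu_{f,closure(V_i)}(0), for 0 < |δ| ≪ ε ≪ 1. -/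
/-- In the stratified setting `V_0 = {0}, …, V_q = X_reg`, with
`f : (X,0) → (ℂ,0)` having an isolated stratified singularity at `0`, combining the
Ebeling–Gusein-Zade formula `ind^ℂ_{X,0}(df) = Σ n_i · Eu_{closure(V_i),0}(df)`, the
identity `Eu_{Y,0}(df) = (−1)^{dim Y} Eu_{f,Y}(0)`, and
`ind^ℂ_{X,0}(df) = (−1)^d (1 − χ(f⁻¹(δ) ∩ X ∩ B_ε))`, one obtains
`1 − χ(f⁻¹(δ) ∩ X ∩ B_ε) = Σ_{i=0}^{q} (1 − χ(lk^ℂ(V_i,X))) · Eu_{f,closure(V_i)}(0)`.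
Here `Euf i = Eu_{f,closure(V_i)}(0)`, `χlk i = χ(lk^ℂ(V_i, X))` (with `χlk q = 0` since
the complex link of the open stratum is empty), `EuFormdf i = Eu_{closure(V_i),0}(df)`,
`indCdf = ind^ℂ_{X,0}(df)` and `χF = χ(f⁻¹(δ) ∩ X ∩ B_ε)` for `0 < |δ| ≪ ε ≪ 1`. -/
theorem euler_obstruction_of_function_via_complex_links
    (d q : ℕ) (hq : 0 < q) (dS : ℕ → ℕ)
    (hd0 : dS 0 = 0) (hdq : dS q = d) (hdi : ∀ i < q, dS i < d)
    (χlk : ℕ → ℤ) (hχlkq : χlk q = 0)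
    (Euf EuFormdf : ℕ → ℤ) (indCdf χF : ℤ)
    -- the Ebeling–Gusein-Zade formula applied to the 1-form `df`
    (hEG : indCdf = (∑ i ∈ Finset.range q,
      (-1 : ℤ) ^ (d - dS i - 1) * (χlk i - 1) * EuFormdf i) + EuFormdf q)
    -- `Eu_{Y,0}(df) = (−1)^{dim Y} Eu_{f,Y}(0)`
    (hdual : ∀ i ≤ q, EuFormdf i = (-1) ^ (dS i) * Euf i)
    -- `ind^ℂ_{X,0}(df) = (−1)^d (1 − χ(f⁻¹(δ) ∩ X ∩ B_ε))`
    (hind : indCdf = (-1) ^ d * (1 - χF)) :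
    1 - χF = ∑ i ∈ Finset.range (q + 1), (1 - χlk i) * Euf i := by
  have hd : 0 < d := by have := hdi 0 hq; omega
  have hsum : ∀ i ∈ Finset.range q,
      (-1 : ℤ) ^ (d - dS i - 1) * (χlk i - 1) * EuFormdf i
        = (-1) ^ d * ((1 - χlk i) * Euf i) := by
    intro i hi
    rw [Finset.mem_range] at hi
    have hlt := hdi i hi
    rw [hdual i hi.le]
    have h1 : (-1 : ℤ) ^ (d - dS i - 1) * (-1) ^ (dS i) = (-1) ^ (d - 1) := by
      rw [← pow_add]; congr 1; omega
    have h2 : (-1 : ℤ) ^ (d - 1) * (-1) = (-1) ^ d := by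
      rw [← pow_succ]; congr 1; omega
    calc (-1 : ℤ) ^ (d - dS i - 1) * (χlk i - 1) * ((-1) ^ (dS i) * Euf i)
        = ((-1 : ℤ) ^ (d - dS i - 1) * (-1) ^ (dS i)) * ((χlk i - 1) * Euf i) := by ring
      _ = (-1 : ℤ) ^ (d - 1) * ((χlk i - 1) * Euf i) := by rw [h1]
      _ = ((-1 : ℤ) ^ (d - 1) * (-1)) * ((1 - χlk i) * Euf i) := by ring
      _ = (-1 : ℤ) ^ d * ((1 - χlk i) * Euf i) := by rw [h2]
  have hEG' : indCdf = (-1) ^ d * ∑ i ∈ Finset.range (q + 1), (1 - χlk i) * Euf i := by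
    rw [hEG, Finset.sum_congr rfl hsum, ← Finset.mul_sum, hdual q le_rfl, hdq,
      Finset.sum_range_succ, hχlkq]
    ring
  have hne : ((-1 : ℤ) ^ d) ≠ 0 := pow_ne_zero _ (by norm_num)
  exact mul_left_cancel₀ hne (hind.symm.trans hEG')
end

section
/- Define the Brasselet number B_{f,Y}(0) = Eu_Y(0) − Eu_{f,Y}(0) for a function germ f with isolated stratified singularity on a reduced complex analytic germ Y (with B_{f,{0}}(0) = 0 by convention Eu_{{0}}(0) = Eu_{f,{0}}(0) = 1). Then from the two identities Eu_X(0) = 1 + Σ_{i=0}^{q−1}(χ(lk^C(V_i,X)) − 1)·Eu_{closure(V_i)}(0) and Eu_{f,X}(0) = 1 − χ(f^{-1}(δ) ∩ X ∩ B_ε) + Σ_{i=0}^{q−1}(χ(lk^C(V_i,X)) − 1)·Eu_{f,closure(V_i)}(0), it follows by induction that χ(f^{-1}(δ) ∩ X ∩ B_ε) = Σ_{i=0}^{q} (1 − χ(lk^C(V_i, X))) · B_{f,closure(V_i)}(0). -/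
/-- Define the Brasselet number `B_{f,Y}(0) = Eu_Y(0) − Eu_{f,Y}(0)`
(with `B_{f,{0}}(0) = 0` via the convention `Eu_{{0}}(0) = Eu_{f,{0}}(0) = 1`). From the
identities
`Eu_X(0) = 1 + Σ_{i<q}(χ(lk^ℂ(V_i,X)) − 1)·Eu_{closure(V_i)}(0)` and
`Eu_{f,X}(0) = 1 − χ(f⁻¹(δ) ∩ X ∩ B_ε) + Σ_{i<q}(χ(lk^ℂ(V_i,X)) − 1)·Eu_{f,closure(V_i)}(0)`
it follows that
`χ(f⁻¹(δ) ∩ X ∩ B_ε) = Σ_{i=0}^{q} (1 − χ(lk^ℂ(V_i,X))) · B_{f,closure(V_i)}(0)`.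
Here `Eu i = Eu_{closure(V_i)}(0)` and `Euf i = Eu_{f,closure(V_i)}(0)` (so `i = q` gives
`X` itself), `χlk i = χ(lk^ℂ(V_i, X))` with `χlk q = 0` (empty complex link of the open
stratum), `B i = Eu i − Euf i`, and `χF = χ(f⁻¹(δ) ∩ X ∩ B_ε)` for `0 < |δ| ≪ ε ≪ 1`. -/
theorem milnor_fiber_euler_char_via_brasselet_numbers
    (q : ℕ) (hq : 0 < q)
    (χlk : ℕ → ℤ) (hχlkq : χlk q = 0)
    (Eu Euf B : ℕ → ℤ) (χF : ℤ)
    (hB : ∀ i ≤ q, B i = Eu i - Euf i)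
    (hEu0 : Eu 0 = 1) (hEuf0 : Euf 0 = 1)
    -- the identity for the Euler obstruction of `X`
    (hEu : Eu q = 1 + ∑ i ∈ Finset.range q, (χlk i - 1) * Eu i)
    -- the identity for the Euler obstruction of the function `f` on `X`
    (hEuf : Euf q = 1 - χF + ∑ i ∈ Finset.range q, (χlk i - 1) * Euf i) :
    χF = ∑ i ∈ Finset.range (q + 1), (1 - χlk i) * B i := by
  rw [Finset.sum_range_succ, hχlkq, hB q le_rfl]
  have hs : ∀ i ∈ Finset.range q, (1 - χlk i) * B i = (1 - χlk i) * (Eu i - Euf i) := by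
    intro i hi
    rw [hB i (le_of_lt (Finset.mem_range.mp hi))]
  rw [Finset.sum_congr rfl hs]
  have h1 : ∑ i ∈ Finset.range q, (1 - χlk i) * (Eu i - Euf i)
      = (∑ i ∈ Finset.range q, (χlk i - 1) * Euf i)
        - ∑ i ∈ Finset.range q, (χlk i - 1) * Eu i := by
    rw [← Finset.sum_sub_distrib]
    exact Finset.sum_congr rfl fun i _ => by ring
  rw [h1]
  linarith [hEu, hEuf]
end
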